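/- arXiv:2511.10827 — 2 statements merged into one kernel-verified Lean document; each statement's English description precedes it below -/
import Mathlib

section
/- Let K ≥ 2, m ≥ 1 and R be integers with 0 ≤ R < K, and let x = ((K−R)/K)·δ_m + (R/K)·δ_{m+1}. Then for every probability distribution q on ℕ with mean m/K such that q(i) = 0 for all i > m, one has H(x, q) ≥ 1 − (K−R)/K². -/
open scoped BigOperators

/-- A probability distribution on ℕ. -/
def IsPMF (p : ℕ → ℝ) : Prop := (∀ i, 0 ≤ p i) ∧ (∑' i, p i) = 1

/-- `p` has (finite) mean `b`. -/
def HasMean (p : ℕ → ℝ) (b : ℝ) : Prop :=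
  Summable (fun i : ℕ => (i:ℝ) * p i) ∧ (∑' i : ℕ, (i:ℝ) * p i) = b

/-- Point mass distribution at `n`. -/
noncomputable def delta (n : ℕ) : ℕ → ℝ := fun i => if i = n then 1 else 0

/-- Uniform distribution on the `m` odd numbers `1,3,…,2m-1`. -/
noncomputable def uo (m : ℕ) : ℕ → ℝ := fun i => if Odd i ∧ i < 2*m then (1:ℝ)/m else 0

/-- Uniform distribution on the `m+1` even numbers `0,2,…,2m`. -/
noncomputable def ue (m : ℕ) : ℕ → ℝ := fun i => if Even i ∧ i ≤ 2*m then (1:ℝ)/(m+1) else 0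

/-- The General Lotto payoff
`H(p,q) = Σ_{(i,j): i>j} p i · q j − Σ_{(i,j): i<j} p i · q j`. -/
noncomputable def Hpay (p q : ℕ → ℝ) : ℝ :=
  (∑' ij : ℕ × ℕ, if ij.2 < ij.1 then p ij.1 * q ij.2 else 0)
  - (∑' ij : ℕ × ℕ, if ij.1 < ij.2 then p ij.1 * q ij.2 else 0)

/-!
Against a `q` supported on `{0,…,m}`, every atom of `x` lies weakly above every atom of `q`, so
`x` never loses and `H(x, q) = 1 - P(X = Y) = 1 - ((K-R)/K) q(m)`. Markov's inequality
`m q(m) ≤ E[Y] = m/K` gives `q(m) ≤ 1/K`.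
-/

theorem IsPMF.summable {p : ℕ → ℝ} (hp : IsPMF p) : Summable p := by
  by_contra h
  simpa [tsum_eq_zero_of_not_summable h] using hp.2

theorem HasMean.natCast_mul_le {q : ℕ → ℝ} {b : ℝ} (hq : ∀ i, 0 ≤ q i) (h : HasMean q b)
    (n : ℕ) : (n : ℝ) * q n ≤ b :=
  h.2 ▸ h.1.le_tsum n fun j _ => mul_nonneg j.cast_nonneg (hq j)

section MixDelta

variable {a b : ℝ} {m n : ℕ}

theorem isPMF_mix_delta (ha : 0 ≤ a) (hb : 0 ≤ b) (hab : a + b = 1) :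
    IsPMF fun i => a * delta m i + b * delta n i := by
  have hsum (k : ℕ) : HasSum (delta k) 1 := by
    unfold delta
    exact hasSum_ite_eq k 1
  refine ⟨fun i => ?_, ?_⟩
  · unfold delta
    positivity
  · rw [(((hsum m).mul_left a).add ((hsum n).mul_left b)).tsum_eq, mul_one, mul_one, hab]

theorem eq_or_eq_of_mix_delta_ne_zero {i : ℕ} (h : a * delta m i + b * delta n i ≠ 0) :
    i = m ∨ i = n := by
  by_contra! hi
  exact h (by simp [delta, hi.1, hi.2])

theorem tsum_mix_delta_mul {q : ℕ → ℝ} (hmn : m ≠ n) (hqn : q n = 0) :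
    ∑' i, (a * delta m i + b * delta n i) * q i = a * q m := by
  rw [tsum_eq_single m fun i hi => ?_]
  · simp [delta, hmn]
  · by_cases hin : i = n
    · simp [hin, hqn]
    · simp [delta, hi, hin]

end MixDelta

theorem Hpay_eq_one_sub_tsum_mul {p q : ℕ → ℝ} (hp : IsPMF p) (hq : IsPMF q)
    (hpq : ∀ i j, p i ≠ 0 → q j ≠ 0 → j ≤ i) :
    Hpay p q = 1 - ∑' i, p i * q i := by
  have hprod : Summable fun ij : ℕ × ℕ => p ij.1 * q ij.2 :=
    hp.summable.mul_of_nonneg hq.summable hp.1 hq.1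
  have hdiag : Summable fun ij : ℕ × ℕ => if ij.1 = ij.2 then p ij.1 * q ij.2 else 0 :=
    hprod.of_nonneg_of_le
      (fun _ => by split_ifs <;> simp [mul_nonneg (hp.1 _) (hq.1 _)])
      (fun _ => by split_ifs <;> simp [mul_nonneg (hp.1 _) (hq.1 _)])
  have hwin : (fun ij : ℕ × ℕ => if ij.2 < ij.1 then p ij.1 * q ij.2 else 0)
      = fun ij => p ij.1 * q ij.2 - if ij.1 = ij.2 then p ij.1 * q ij.2 else 0 := by
    funext ⟨i, j⟩
    by_cases hij : p i * q j = 0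
    · simp [hij]
    · have hji := hpq i j (left_ne_zero_of_mul hij) (right_ne_zero_of_mul hij)
      rcases hji.lt_or_eq with hlt | rfl
      · simp [hlt, hlt.ne']
      · simp
  have hlose : (fun ij : ℕ × ℕ => if ij.1 < ij.2 then p ij.1 * q ij.2 else 0) = 0 := by
    funext ⟨i, j⟩
    by_cases hij : p i * q j = 0
    · simp [hij]
    · simp [not_lt.mpr (hpq i j (left_ne_zero_of_mul hij) (right_ne_zero_of_mul hij))]
  have hdiag_eq : (∑' ij : ℕ × ℕ, if ij.1 = ij.2 then p ij.1 * q ij.2 else 0)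
      = ∑' i, p i * q i := by
    have hinj : Function.Injective fun i : ℕ => (i, i) := fun _ _ h => (Prod.mk.inj h).1
    rw [← hinj.tsum_eq]
    · simp
    · rintro ⟨i, j⟩ h
      obtain rfl : i = j := by
        by_contra hij
        simp [hij] at h
      exact ⟨i, rfl⟩
  rw [Hpay, hwin, hlose, hprod.tsum_sub hdiag, ← hp.summable.tsum_mul_tsum hq.summable hprod,
    hp.2, hq.2, hdiag_eq]
  simp [Pi.zero_def]

theorem stmt13_general (K m R : ℕ) (hm : 1 ≤ m) (hR : R < K)
    (q : ℕ → ℝ) (hq : IsPMF q) (hmean : HasMean q ((m:ℝ)/(K:ℝ)))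
    (hsupp : ∀ i, m < i → q i = 0) :
    1 - ((K:ℝ)-(R:ℝ))/(K:ℝ)^2
      ≤ Hpay (fun i => (((K:ℝ)-(R:ℝ))/(K:ℝ)) * delta m i
          + ((R:ℝ)/(K:ℝ)) * delta (m+1) i) q := by
  have hK : (0 : ℝ) < K := by exact_mod_cast (Nat.zero_le R).trans_lt hR
  have hRK : (R : ℝ) ≤ K := by exact_mod_cast hR.le
  set a : ℝ := ((K:ℝ)-(R:ℝ))/(K:ℝ) with ha_def
  have ha : 0 ≤ a := div_nonneg (sub_nonneg.mpr hRK) hK.le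
  have hx : IsPMF fun i => a * delta m i + ((R:ℝ)/(K:ℝ)) * delta (m+1) i :=
    isPMF_mix_delta ha (by positivity) (by rw [ha_def]; field_simp; ring)
  have hsep (i j : ℕ) (hi : a * delta m i + ((R:ℝ)/(K:ℝ)) * delta (m+1) i ≠ 0) (hj : q j ≠ 0) :
      j ≤ i := by
    have hjm : j ≤ m := not_lt.mp (mt (hsupp j) hj)
    rcases eq_or_eq_of_mix_delta_ne_zero hi with rfl | rfl <;> omega
  have hqm : q m ≤ 1 / K := by
    have hm' : (0 : ℝ) < m := by exact_mod_cast hm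
    refine le_of_mul_le_mul_left ?_ hm'
    rw [mul_one_div]
    exact hmean.natCast_mul_le hq.1 m
  calc 1 - ((K:ℝ)-(R:ℝ))/(K:ℝ)^2 = 1 - a * (1 / K) := by rw [ha_def]; ring
    _ ≤ 1 - a * q m := by gcongr
    _ = _ := by
      rw [Hpay_eq_one_sub_tsum_mul hx hq hsep,
        tsum_mix_delta_mul (Nat.succ_ne_self m).symm (hsupp _ (Nat.lt_succ_self m))]

/-- the strategy ((K−R)/K)·δ_m + (R/K)·δ_{m+1} guarantees at least
1 − (K−R)/K² against any distribution with mean m/K supported on {0,…,m}. -/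
theorem stmt13 (K m R : ℕ) (hK : 2 ≤ K) (hm : 1 ≤ m) (hR : R < K)
    (q : ℕ → ℝ) (hq : IsPMF q) (hmean : HasMean q ((m:ℝ)/(K:ℝ)))
    (hsupp : ∀ i, m < i → q i = 0) :
    1 - ((K:ℝ)-(R:ℝ))/(K:ℝ)^2
      ≤ Hpay (fun i => (((K:ℝ)-(R:ℝ))/(K:ℝ)) * delta m i
          + ((R:ℝ)/(K:ℝ)) * delta (m+1) i) q :=
  stmt13_general K m R hm hR q hq hmean hsupp
end

section
/- Let m ≥ 1 be an integer and let q be a probability distribution on ℕ. Then H(u^o_m, q) = 1 − (1/m)·Σ_{i=1}^{2m} Q(i) and H(u^e_m, q) = 1 − (1/(m+1))·(1 + Σ_{i=1}^{2m+1} Q(i)), where Q(i) := Σ_{j≥i} q(j). -/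
open scoped BigOperators

/-! Splitting the double sums defining `H` along the first coordinate gives, for finitely
supported `p` and `Q = tailSum q`,
`H(p, q) = Σ i, p i * (Σ_{j<i} q j - Σ_{j>i} q j) = Σ i, p i * (1 - Q i - Q (i + 1))`.
Under `u^o_m` and `u^e_m` the terms `Q i + Q (i + 1)` at the atoms pair up into the sum of `Q`
over `{1, …, 2m}`, resp. `{0, …, 2m + 1}`, and `Q 0 = 1`. -/

open Finset

noncomputable def tailSum (q : ℕ → ℝ) (i : ℕ) : ℝ := ∑' j, if i ≤ j then q j else 0

lemma Summable.ite_zero {ι G : Type*} [AddCommGroup G] [UniformSpace G] [IsUniformAddGroup G]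
    [CompleteSpace G] {f : ι → G} (hf : Summable f) (P : ι → Prop) [DecidablePred P] :
    Summable fun i => if P i then f i else 0 :=
  (hf.indicator {i | P i}).congr fun i => by simp [Set.indicator_apply]

lemma tsum_ite_lt_add_tailSum {q : ℕ → ℝ} (hq : Summable q) (i : ℕ) :
    (∑' j, if j < i then q j else 0) + tailSum q i = ∑' j, q j := by
  rw [tailSum, ← (hq.ite_zero _).tsum_add (hq.ite_zero _)]
  refine tsum_congr fun j => ?_
  split_ifs <;> first | omega | simp

lemma tsum_prod_ite_mul {ι κ : Type*} {p : ι → ℝ} {q : κ → ℝ} {s : Finset ι}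
    (hp : ∀ i ∉ s, p i = 0) (hq : Summable q) (r : ι → κ → Prop)
    [∀ i j, Decidable (r i j)] :
    (∑' ij : ι × κ, if r ij.1 ij.2 then p ij.1 * q ij.2 else 0)
      = ∑ i ∈ s, p i * ∑' j, if r i j then q j else 0 := by
  have hpq : Summable fun ij : ι × κ => ‖p ij.1 * q ij.2‖ :=
    (summable_of_ne_finset_zero (s := s) (by simp_all)).mul_norm hq.norm
  have hsum : Summable fun ij : ι × κ => if r ij.1 ij.2 then p ij.1 * q ij.2 else 0 :=
    hpq.of_norm_bounded fun ij => by split_ifs <;> simp only [norm_zero, le_refl, norm_nonneg]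
  rw [hsum.tsum_prod' hsum.prod_factor, tsum_eq_sum (s := s) (fun i hi => by simp [hp i hi])]
  refine sum_congr rfl fun i _ => ?_
  rw [← tsum_mul_left]
  simp only [mul_ite, mul_zero]

lemma hpay_eq_sum_tailSum {p q : ℕ → ℝ} {s : Finset ℕ} (hp : ∀ i ∉ s, p i = 0)
    (hq : Summable q) (hq1 : ∑' j, q j = 1) :
    Hpay p q = ∑ i ∈ s, p i * (1 - tailSum q i - tailSum q (i + 1)) := by
  have hlower (i : ℕ) : (∑' j, if j < i then q j else 0) = 1 - tailSum q i := by
    linarith [tsum_ite_lt_add_tailSum hq i]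
  have hupper (i : ℕ) : (∑' j, if i < j then q j else 0) = tailSum q (i + 1) := by
    simp only [tailSum, Nat.add_one_le_iff]
  rw [Hpay, tsum_prod_ite_mul hp hq (fun i j => j < i), tsum_prod_ite_mul hp hq (fun i j => i < j),
    ← sum_sub_distrib]
  refine sum_congr rfl fun i _ => ?_
  rw [hlower, hupper]
  ring

lemma sum_range_two_mul {M : Type*} [AddCommMonoid M] (f : ℕ → M) (n : ℕ) :
    ∑ i ∈ range (2 * n), f i = ∑ k ∈ range n, (f (2 * k) + f (2 * k + 1)) := by
  induction n with
  | zero => simp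
  | succ n ih => rw [Nat.mul_succ, sum_range_succ, sum_range_succ, sum_range_succ, ih, add_assoc]

lemma sum_Icc_one_eq_sum_range {M : Type*} [AddCommMonoid M] (f : ℕ → M) (n : ℕ) :
    ∑ i ∈ Icc 1 n, f i = ∑ i ∈ range n, f (i + 1) := by
  induction n with
  | zero => simp
  | succ n ih => rw [sum_Icc_succ_top (by omega), sum_range_succ, ih]

lemma hpay_uo {m : ℕ} (hm : m ≠ 0) {q : ℕ → ℝ} (hq : Summable q) (hq1 : ∑' j, q j = 1) :
    Hpay (uo m) q = 1 - (1 / m) * ∑ i ∈ Icc 1 (2 * m), tailSum q i := by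
  have hsupp (i : ℕ) (hi : i ∉ range (2 * m)) : uo m i = 0 :=
    if_neg fun h => hi (mem_range.2 h.2)
  have heven (k : ℕ) : uo m (2 * k) = 0 :=
    if_neg fun h => Nat.not_odd_iff_even.2 (even_two_mul k) h.1
  have hodd (k : ℕ) (hk : k < m) : uo m (2 * k + 1) = 1 / m :=
    if_pos ⟨odd_two_mul_add_one k, by omega⟩
  rw [hpay_eq_sum_tailSum hsupp hq hq1, sum_range_two_mul, sum_Icc_one_eq_sum_range,
    sum_range_two_mul, mul_sum]
  calc _ = ∑ k ∈ range m,
          (1 / m - 1 / m * (tailSum q (2 * k + 1) + tailSum q (2 * k + 1 + 1))) :=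
        sum_congr rfl fun k hk => by rw [heven, hodd k (mem_range.1 hk)]; ring
    _ = _ := by
        rw [sum_sub_distrib, sum_const, card_range, nsmul_eq_mul,
          mul_one_div_cancel (Nat.cast_ne_zero.2 hm)]

lemma hpay_ue (m : ℕ) {q : ℕ → ℝ} (hq : Summable q) (hq1 : ∑' j, q j = 1) :
    Hpay (ue m) q = 1 - (1 / (m + 1)) * (1 + ∑ i ∈ Icc 1 (2 * m + 1), tailSum q i) := by
  have hsupp (i : ℕ) (hi : i ∉ range (2 * (m + 1))) : ue m i = 0 :=
    if_neg fun h => hi (mem_range.2 (by omega))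
  have heven (k : ℕ) (hk : k < m + 1) : ue m (2 * k) = 1 / (m + 1) :=
    if_pos ⟨even_two_mul k, by omega⟩
  have hodd (k : ℕ) : ue m (2 * k + 1) = 0 :=
    if_neg fun h => Nat.not_even_iff_odd.2 (odd_two_mul_add_one k) h.1
  have htail0 : tailSum q 0 = 1 := by simpa [tailSum] using hq1
  have hsum : 1 + ∑ i ∈ Icc 1 (2 * m + 1), tailSum q i
      = ∑ i ∈ range (2 * (m + 1)), tailSum q i := by
    rw [sum_Icc_one_eq_sum_range, show 2 * (m + 1) = 2 * m + 1 + 1 by ring,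
      sum_range_succ' _ (2 * m + 1), htail0, add_comm]
  rw [hpay_eq_sum_tailSum hsupp hq hq1, hsum, sum_range_two_mul, sum_range_two_mul, mul_sum]
  calc _ = ∑ k ∈ range (m + 1),
          (1 / (m + 1) - 1 / (m + 1) * (tailSum q (2 * k) + tailSum q (2 * k + 1))) :=
        sum_congr rfl fun k hk => by rw [heven k (mem_range.1 hk), hodd]; ring
    _ = _ := by
        rw [sum_sub_distrib, sum_const, card_range, nsmul_eq_mul]
        push_cast
        rw [mul_one_div_cancel (by positivity)]

/-- exact formulas for H(u^o_m, q) and H(u^e_m, q) in terms of the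
tail sums Q(i) = Σ_{j ≥ i} q j. -/
theorem stmt18 (m : ℕ) (hm : 1 ≤ m) (q : ℕ → ℝ) (hq : IsPMF q) :
    Hpay (uo m) q
      = 1 - (1/(m:ℝ)) * ∑ i ∈ Finset.Icc 1 (2*m),
          (∑' j : ℕ, if i ≤ j then q j else 0) ∧
    Hpay (ue m) q
      = 1 - (1/((m:ℝ)+1)) * (1 + ∑ i ∈ Finset.Icc 1 (2*m+1),
          (∑' j : ℕ, if i ≤ j then q j else 0)) := by
  obtain ⟨-, hq1⟩ := hq
  have hqs : Summable q := by
    by_contra h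
    rw [tsum_eq_zero_of_not_summable h] at hq1
    exact zero_ne_one hq1
  exact ⟨hpay_uo (by omega) hqs hq1, hpay_ue m hqs hq1⟩
end
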